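/- Let d = 1, λ ∈ (0,1) with λ ≠ 1/2, d_λ > 0, Δx > 0, and let i ∈ ℤ with |i| ≥ 2. Then the finite-volume weight satisfies G_{0,i} = − (d_λ Δx^{1−2λ}) / (2λ(1−2λ)) · ( 2|i|^{1−2λ} − (|i|−1)^{1−2λ} − (|i|+1)^{1−2λ} ). -/

import Mathlib

/-!
For `x ∈ R_0` and `|i| ≥ 2`, the translated cell `R_i - x` stays away from both `0` and the
truncation `{|z| ≤ Δx/2}`, so the inner integral is `-d_λ ∫_{R_i - x} |z|^(-(1+2λ)) dz`.
Away from `0`, `|z|^r` has the antiderivative `z |z|^r / (r + 1)`, which in turn has the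
antiderivative `|z|^(r+2) / ((r + 1)(r + 2))`. With `r = -(1+2λ)` the double integral is thus a
second difference of `|z|^(1-2λ)` at `iΔx` with step `Δx`, for both signs of `i` at once.
-/

open MeasureTheory

/-- The 1-d Lévy-type measure `μ_λ` with density `d_λ |z|^(-(1+2λ))` w.r.t. Lebesgue measure. -/
noncomputable def fracMeasure1 (lam dl : ℝ) : Measure ℝ :=
  volume.withDensity (fun z => ENNReal.ofReal (dl * |z| ^ (-(1 + 2 * lam))))

/-- The 1-d spatial grid cell `R_i = [iΔx - Δx/2, iΔx + Δx/2)`. -/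
def cell1 (dx : ℝ) (i : ℤ) : Set ℝ :=
  Set.Ico ((i : ℝ) * dx - dx / 2) ((i : ℝ) * dx + dx / 2)

/-- The 1-d finite-volume weight
`G_{α,β} = ∫_{R_α} ∫_{|z| > Δx/2} (1_{R_β}(x) - 1_{R_β}(x+z)) dμ_λ(z) dx`. -/
noncomputable def weight1 (lam dl dx : ℝ) (a b : ℤ) : ℝ :=
  ∫ x in cell1 dx a,
    ∫ z in {z : ℝ | dx / 2 < |z|},
      ((cell1 dx b).indicator (fun _ => (1 : ℝ)) x
        - (cell1 dx b).indicator (fun _ => (1 : ℝ)) (x + z)) ∂(fracMeasure1 lam dl)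

open Set intervalIntegral
open scoped Interval

section AbsRpow

variable {x : ℝ}

theorem hasDerivAt_abs_rpow_of_ne_zero (p : ℝ) (hx : x ≠ 0) :
    HasDerivAt (fun z : ℝ => |z| ^ p) (p * |x| ^ (p - 2) * x) x := by
  have hx' : |x| ≠ 0 := abs_ne_zero.mpr hx
  refine ((hasDerivAt_abs hx).rpow_const (Or.inl hx')).congr_deriv ?_
  rw [show p - 1 = p - 2 + 1 by ring, Real.rpow_add_one hx']
  linear_combination (p * |x| ^ (p - 2)) * sign_mul_abs x

theorem hasDerivAt_mul_abs_rpow (r : ℝ) (hx : x ≠ 0) :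
    HasDerivAt (fun z : ℝ => z * |z| ^ r) ((r + 1) * |x| ^ r) x := by
  have hx' : 0 < |x| := abs_pos.mpr hx
  refine ((hasDerivAt_id x).mul (hasDerivAt_abs_rpow_of_ne_zero r hx)).congr_deriv ?_
  rw [Real.rpow_sub hx', Real.rpow_two, id, sq_abs]
  field_simp
  ring

theorem continuousOn_mul_abs_rpow (r : ℝ) :
    ContinuousOn (fun z : ℝ => z * |z| ^ r) {0}ᶜ :=
  fun _ hz => (hasDerivAt_mul_abs_rpow r hz).continuousAt.continuousWithinAt

variable {a b r : ℝ}

theorem integral_abs_rpow (hr : r ≠ -1) (h0 : (0 : ℝ) ∉ [[a, b]]) :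
    ∫ z in a..b, |z| ^ r = (b * |b| ^ r - a * |a| ^ r) / (r + 1) := by
  have hr' : r + 1 ≠ 0 := fun h => hr (by linarith)
  have hderiv : ∀ z ∈ [[a, b]], HasDerivAt (fun z : ℝ => z * |z| ^ r / (r + 1)) (|z| ^ r) z :=
    fun z hz => by
      refine ((hasDerivAt_mul_abs_rpow r (ne_of_mem_of_not_mem hz h0)).div_const
        (r + 1)).congr_deriv ?_
      field_simp
  have hcont : ContinuousOn (fun z : ℝ => |z| ^ r) [[a, b]] :=
    continuous_abs.continuousOn.rpow_const fun z hz =>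
      Or.inl (abs_ne_zero.mpr (ne_of_mem_of_not_mem hz h0))
  rw [integral_eq_sub_of_hasDerivAt hderiv hcont.intervalIntegrable]
  ring

theorem integral_mul_abs_rpow (hr : r ≠ -2) (h0 : (0 : ℝ) ∉ [[a, b]]) :
    ∫ z in a..b, z * |z| ^ r = (|b| ^ (r + 2) - |a| ^ (r + 2)) / (r + 2) := by
  have hr' : r + 2 ≠ 0 := fun h => hr (by linarith)
  have hderiv : ∀ z ∈ [[a, b]],
      HasDerivAt (fun z : ℝ => |z| ^ (r + 2) / (r + 2)) (z * |z| ^ r) z := fun z hz => by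
    refine ((hasDerivAt_abs_rpow_of_ne_zero (r + 2) (ne_of_mem_of_not_mem hz h0)).div_const
      (r + 2)).congr_deriv ?_
    rw [add_sub_cancel_right]
    field_simp
  have hcont : ContinuousOn (fun z : ℝ => z * |z| ^ r) [[a, b]] :=
    (continuousOn_mul_abs_rpow r).mono fun z hz => ne_of_mem_of_not_mem hz h0
  rw [integral_eq_sub_of_hasDerivAt hderiv hcont.intervalIntegrable]
  ring

end AbsRpow

section

variable {r c h : ℝ}

theorem integral_integral_abs_rpow (hr₁ : r ≠ -1) (hr₂ : r ≠ -2) (hh : 0 ≤ h)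
    (hc : 2 * h < |c|) :
    ∫ x in -h..h, ∫ z in (c - h - x)..(c + h - x), |z| ^ r
      = (|c + 2 * h| ^ (r + 2) - 2 * |c| ^ (r + 2) + |c - 2 * h| ^ (r + 2))
        / ((r + 1) * (r + 2)) := by
  have hr₁' : r + 1 ≠ 0 := fun hr => hr₁ (by linarith)
  have hr₂' : r + 2 ≠ 0 := fun hr => hr₂ (by linarith)
  have hzero : ∀ u v, |u - c| ≤ 2 * h → |v - c| ≤ 2 * h → (0 : ℝ) ∉ [[u, v]] := by
    intro u v hu hv h0
    rw [abs_le] at hu hv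
    rw [mem_uIcc] at h0
    cases abs_cases c <;> rcases h0 with h0 | h0 <;> linarith [h0.1, h0.2]
  have hinner : EqOn (fun x => ∫ z in (c - h - x)..(c + h - x), |z| ^ r)
      (fun x => ((c + h - x) * |c + h - x| ^ r - (c - h - x) * |c - h - x| ^ r) / (r + 1))
      [[-h, h]] := fun x hx => by
    rw [uIcc_of_le (by linarith), mem_Icc] at hx
    exact integral_abs_rpow hr₁ (hzero _ _ (abs_le.mpr ⟨by linarith, by linarith⟩)
      (abs_le.mpr ⟨by linarith, by linarith⟩))
  have houter : ∀ d, |d - c| ≤ h →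
      ∫ x in -h..h, (d - x) * |d - x| ^ r
        = (|d + h| ^ (r + 2) - |d - h| ^ (r + 2)) / (r + 2) := by
    intro d hd
    rw [abs_le] at hd
    rw [integral_comp_sub_left (fun z => z * |z| ^ r) d, sub_neg_eq_add,
      integral_mul_abs_rpow hr₂ (hzero _ _ (abs_le.mpr ⟨by linarith, by linarith⟩)
        (abs_le.mpr ⟨by linarith, by linarith⟩))]
  have hint : ∀ d, |d - c| ≤ h →
      IntervalIntegrable (fun x => (d - x) * |d - x| ^ r) volume (-h) h := by
    intro d hd
    rw [abs_le] at hd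
    refine ContinuousOn.intervalIntegrable ((continuousOn_mul_abs_rpow r).comp (by fun_prop) ?_)
    intro x hx
    rw [uIcc_of_le (by linarith), mem_Icc] at hx
    have hdx : |d - x - c| ≤ 2 * h := abs_le.mpr ⟨by linarith, by linarith⟩
    exact fun h0 => hzero _ _ hdx hdx (by rw [uIcc_self]; exact (mem_singleton_iff.mp h0).symm)
  have hp : |c + h - c| ≤ h := by rw [add_sub_cancel_left, abs_of_nonneg hh]
  have hm : |c - h - c| ≤ h := by rw [sub_sub_cancel_left, abs_neg, abs_of_nonneg hh]
  rw [integral_congr hinner, intervalIntegral.integral_div,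
    integral_sub (hint _ hp) (hint _ hm), houter _ hp, houter _ hm]
  field_simp
  ring_nf

end

section Weight

variable {lam dl : ℝ}

theorem setIntegral_fracMeasure1 (hdl : 0 ≤ dl) {s : Set ℝ} (hs : MeasurableSet s)
    (g : ℝ → ℝ) :
    ∫ z in s, g z ∂fracMeasure1 lam dl = ∫ z in s, dl * |z| ^ (-(1 + 2 * lam)) * g z := by
  rw [fracMeasure1, setIntegral_withDensity_eq_setIntegral_toReal_smul (by fun_prop)
    (ae_of_all _ fun _ => ENNReal.ofReal_lt_top) g hs]
  simp_rw [ENNReal.toReal_ofReal (mul_nonneg hdl (Real.rpow_nonneg (abs_nonneg _) _)), smul_eq_mul]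

theorem setIntegral_indicator_sub_indicator_add (hdl : 0 ≤ dl) {a b x : ℝ} {s : Set ℝ}
    (hab : a ≤ b) (hs : MeasurableSet s) (hx : x ∉ Ico a b) (hsub : Ico (a - x) (b - x) ⊆ s) :
    ∫ z in s, ((Ico a b).indicator (fun _ => (1 : ℝ)) x
        - (Ico a b).indicator (fun _ => (1 : ℝ)) (x + z)) ∂fracMeasure1 lam dl
      = -dl * ∫ z in (a - x)..(b - x), |z| ^ (-(1 + 2 * lam)) := by
  have hshift : ∀ z, dl * |z| ^ (-(1 + 2 * lam)) * ((Ico a b).indicator (fun _ => (1 : ℝ)) x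
        - (Ico a b).indicator (fun _ => (1 : ℝ)) (x + z))
      = -(Ico (a - x) (b - x)).indicator (fun z => dl * |z| ^ (-(1 + 2 * lam))) z := fun z => by
    have hmem : x + z ∈ Ico a b ↔ z ∈ Ico (a - x) (b - x) := by
      rw [← preimage_const_add_Ico]; rfl
    by_cases hz : z ∈ Ico (a - x) (b - x) <;> simp [indicator_of_notMem hx, hz, hmem]
  simp_rw [setIntegral_fracMeasure1 hdl hs, hshift]
  rw [MeasureTheory.integral_neg, setIntegral_indicator measurableSet_Ico,
    inter_eq_right.mpr hsub, integral_Ico_eq_integral_Ioc, ← integral_of_le (by linarith),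
    intervalIntegral.integral_const_mul, neg_mul]

theorem weight1_zero_eq_integral_integral {dx : ℝ} (hdl : 0 ≤ dl) (hdx : 0 < dx) {i : ℤ}
    (hi : 2 ≤ |i|) :
    weight1 lam dl dx 0 i = -dl * ∫ x in -(dx / 2)..(dx / 2),
      ∫ z in ((i : ℝ) * dx - dx / 2 - x)..((i : ℝ) * dx + dx / 2 - x),
        |z| ^ (-(1 + 2 * lam)) := by
  have hc : 2 * dx ≤ |(i : ℝ) * dx| := by
    rw [abs_mul, abs_of_pos hdx]
    gcongr
    exact_mod_cast hi
  simp only [weight1, cell1, Int.cast_zero, zero_mul, zero_sub, zero_add]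
  rw [integral_of_le (by linarith), ← integral_Ico_eq_integral_Ioc,
    ← MeasureTheory.integral_const_mul]
  refine setIntegral_congr_fun measurableSet_Ico fun x hx => ?_
  rw [mem_Ico] at hx
  refine setIntegral_indicator_sub_indicator_add hdl (by linarith)
    (measurableSet_lt measurable_const continuous_abs.measurable) ?_ ?_
  · rintro ⟨h₁, h₂⟩
    cases abs_cases ((i : ℝ) * dx) <;> linarith
  · rintro z ⟨h₁, h₂⟩
    show dx / 2 < |z|
    cases abs_cases ((i : ℝ) * dx) <;> cases abs_cases z <;> linarith

end Weight

theorem abs_add_one_rpow_add_abs_sub_one_rpow {t : ℝ} (ht : 1 ≤ |t|) (p : ℝ) :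
    |t + 1| ^ p + |t - 1| ^ p = (|t| + 1) ^ p + (|t| - 1) ^ p := by
  rcases le_abs'.mp ht with ht | ht
  · rw [abs_of_neg (by linarith : t < 0), abs_of_nonpos (by linarith : t + 1 ≤ 0),
      abs_of_neg (by linarith : t - 1 < 0), add_comm]
    ring_nf
  · rw [abs_of_pos (by linarith : 0 < t), abs_of_pos (by linarith : 0 < t + 1),
      abs_of_nonneg (by linarith : 0 ≤ t - 1)]

theorem stmt19 (lam dl dx : ℝ) (hlam : lam ∈ Set.Ioo (0 : ℝ) 1)
    (hlam2 : lam ≠ 1 / 2) (hdl : 0 < dl) (hdx : 0 < dx)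
    (i : ℤ) (hi : 2 ≤ |i|) :
    weight1 lam dl dx 0 i
      = -(dl * dx ^ (1 - 2 * lam)) / (2 * lam * (1 - 2 * lam))
        * (2 * |(i : ℝ)| ^ (1 - 2 * lam)
          - (|(i : ℝ)| - 1) ^ (1 - 2 * lam)
          - (|(i : ℝ)| + 1) ^ (1 - 2 * lam)) := by
  have hi' : (2 : ℝ) ≤ |(i : ℝ)| := by exact_mod_cast hi
  have hr₁ : -(1 + 2 * lam) ≠ -1 := fun h => hlam.1.ne' (by linarith)
  have hr₂ : -(1 + 2 * lam) ≠ -2 := fun h => hlam2 (by linarith)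
  have hc : 2 * (dx / 2) < |(i : ℝ) * dx| := by
    rw [abs_mul, abs_of_pos hdx]
    nlinarith
  have hscale : ∀ t : ℝ, |t * dx| ^ (1 - 2 * lam) = |t| ^ (1 - 2 * lam) * dx ^ (1 - 2 * lam) :=
    fun t => by rw [abs_mul, abs_of_pos hdx, Real.mul_rpow (abs_nonneg t) hdx.le]
  rw [weight1_zero_eq_integral_integral hdl.le hdx hi,
    integral_integral_abs_rpow hr₁ hr₂ (by positivity) hc]
  rw [show -(1 + 2 * lam) + 2 = 1 - 2 * lam by ring, show -(1 + 2 * lam) + 1 = -(2 * lam) by ring,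
    show (i : ℝ) * dx + 2 * (dx / 2) = ((i : ℝ) + 1) * dx by ring,
    show (i : ℝ) * dx - 2 * (dx / 2) = ((i : ℝ) - 1) * dx by ring, hscale, hscale, hscale]
  have hsym := abs_add_one_rpow_add_abs_sub_one_rpow (t := (i : ℝ)) (by linarith) (1 - 2 * lam)
  have hs : 1 - 2 * lam ≠ 0 := fun h => hlam2 (by linarith)
  have hl : lam ≠ 0 := hlam.1.ne'
  field_simp
  linear_combination hsym
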